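/- Let (Ω, P) be a probability space, let z : Ω → ℝ be uniformly distributed on [0,1], let a ∈ ℝ, σ(a) = 1/(1 + exp(−a)), and h = 1_{z < σ(a)}. Let L₁, L₀ : Ω → ℝ be square-integrable random variables each independent of z, and set L = h·L₁ + (1 − h)·L₀ and ĝ = (h − σ(a))·L. Then the variance of the uncentered estimator satisfies Var[ĝ] = E[(h − σ(a))²·L²] − (σ(a)(1 − σ(a)))²·(E[L₁] − E[L₀])². -/

import Mathlib

/-!
Write `s = σ(a)` and `E = {z < s}`, so that `h = 1_E` and `P(E) = s` because `z` is uniform.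
Since `h² = h`, the estimator splits as `ĝ = (1 - s)·1_E·L₁ - s·1_{Eᶜ}·L₀`, and the independence
of `Lᵢ` from `z` gives `E[1_E·L₁] = s·E[L₁]` and `E[1_{Eᶜ}·L₀] = (1 - s)·E[L₀]`. Hence
`E[ĝ] = s(1 - s)(E[L₁] - E[L₀])`, while `ĝ² = (h - s)²·L²` pointwise.
-/

open MeasureTheory ProbabilityTheory

/-- The logistic sigmoid `σ(a) = 1/(1 + exp(−a))`. -/
noncomputable def sigmoid (a : ℝ) : ℝ := 1 / (1 + Real.exp (-a))

open Set

lemma sigmoid_mem_Icc (a : ℝ) : sigmoid a ∈ Icc 0 1 := by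
  rw [sigmoid, one_div]
  exact ⟨(Real.sigmoid_pos a).le, Real.sigmoid_le_one a⟩

section

variable {Ω : Type*} [MeasurableSpace Ω] {μ : Measure Ω} {z : Ω → ℝ}

lemma measureReal_preimage_Iio_of_map_eq_uniform (hz : Measurable z)
    (hunif : μ.map z = volume.restrict (Icc (0 : ℝ) 1)) {p : ℝ} (hp₀ : 0 ≤ p) (hp₁ : p ≤ 1) :
    μ.real (z ⁻¹' Iio p) = p := by
  have hIio_inter : Iio p ∩ Icc 0 1 = Ico 0 p := by
    ext x
    simp only [mem_inter_iff, mem_Iio, mem_Icc, mem_Ico]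
    constructor
    · rintro ⟨hxp, hx₀, -⟩
      exact ⟨hx₀, hxp⟩
    · rintro ⟨hx₀, hxp⟩
      exact ⟨hxp, hx₀, hxp.le.trans hp₁⟩
  rw [measureReal_def, ← Measure.map_apply hz measurableSet_Iio, hunif,
    Measure.restrict_apply measurableSet_Iio, hIio_inter, Real.volume_Ico, sub_zero,
    ENNReal.toReal_ofReal hp₀]

lemma ProbabilityTheory.IndepFun.integral_indicator_preimage {X : Ω → ℝ} (hXz : IndepFun X z μ)
    (hz : Measurable z) (hX : AEStronglyMeasurable X μ) {S : Set ℝ} (hS : MeasurableSet S) :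
    ∫ ω, (z ⁻¹' S).indicator X ω ∂μ = μ.real (z ⁻¹' S) * ∫ ω, X ω ∂μ := by
  have hφ : Measurable (S.indicator (1 : ℝ → ℝ)) := measurable_one.indicator hS
  have hsplit : ∀ ω, (z ⁻¹' S).indicator X ω = S.indicator 1 (z ω) * X ω := fun ω => by
    by_cases hω : z ω ∈ S <;> simp [hω]
  calc ∫ ω, (z ⁻¹' S).indicator X ω ∂μ = ∫ ω, S.indicator 1 (z ω) * X ω ∂μ := by
        simp_rw [hsplit]
    _ = (∫ ω, S.indicator 1 (z ω) ∂μ) * ∫ ω, X ω ∂μ :=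
        (hXz.symm.comp hφ measurable_id).integral_fun_mul_eq_mul_integral
          (hφ.comp hz).aestronglyMeasurable hX
    _ = μ.real (z ⁻¹' S) * ∫ ω, X ω ∂μ := by
        rw [← integral_indicator_one (hz hS)]
        rfl

end

/-- With `z` uniform on `[0,1]`, `h = 1_{z < σ(a)}`, square-integrable
losses `L₁, L₀` independent of `z`, `L = h·L₁ + (1 − h)·L₀` and `ĝ = (h − σ(a))·L`,
the variance of the uncentered estimator is
`Var[ĝ] = E[(h − σ(a))²·L²] − (σ(a)(1 − σ(a)))²·(E[L₁] − E[L₀])²`. -/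
theorem stmt12 {Ω : Type*} [MeasurableSpace Ω] (μ : Measure Ω) [IsProbabilityMeasure μ]
    (z : Ω → ℝ) (hz : Measurable z)
    (hunif : Measure.map z μ = volume.restrict (Set.Icc (0 : ℝ) 1))
    (a : ℝ) (h : Ω → ℝ) (hh : h = fun ω => if z ω < sigmoid a then 1 else 0)
    (L₁ L₀ : Ω → ℝ) (hL₁ : MemLp L₁ 2 μ) (hL₀ : MemLp L₀ 2 μ)
    (hind₁ : IndepFun L₁ z μ) (hind₀ : IndepFun L₀ z μ)
    (L : Ω → ℝ) (hL : L = fun ω => h ω * L₁ ω + (1 - h ω) * L₀ ω)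
    (g : Ω → ℝ) (hg : g = fun ω => (h ω - sigmoid a) * L ω)
    (Var : (Ω → ℝ) → ℝ)
    (hVar : ∀ X : Ω → ℝ, Var X = (∫ ω, (X ω) ^ 2 ∂μ) - (∫ ω, X ω ∂μ) ^ 2) :
    Var g = (∫ ω, (h ω - sigmoid a) ^ 2 * (L ω) ^ 2 ∂μ)
      - (sigmoid a * (1 - sigmoid a)) ^ 2
        * ((∫ ω, L₁ ω ∂μ) - ∫ ω, L₀ ω ∂μ) ^ 2 := by
  set s := sigmoid a
  obtain ⟨hs₀, hs₁⟩ := sigmoid_mem_Icc a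
  set E := z ⁻¹' Iio s
  have hE : μ.real E = s := measureReal_preimage_Iio_of_map_eq_uniform hz hunif hs₀ hs₁
  have hEc : μ.real (z ⁻¹' (Iio s)ᶜ) = 1 - s := by
    rw [preimage_compl, probReal_compl_eq_one_sub (hz measurableSet_Iio), hE]
  have hL₁i : Integrable L₁ μ := hL₁.integrable one_le_two
  have hL₀i : Integrable L₀ μ := hL₀.integrable one_le_two
  have hg_split :
      g = fun ω => (1 - s) * E.indicator L₁ ω - s * (z ⁻¹' (Iio s)ᶜ).indicator L₀ ω := by
    ext ω
    by_cases hω : z ω < s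
    · simp [hg, hL, hh, E, hω]
    · simp [hg, hL, hh, E, hω, not_lt.mp hω]
  have hEg : ∫ ω, g ω ∂μ = s * (1 - s) * ((∫ ω, L₁ ω ∂μ) - ∫ ω, L₀ ω ∂μ) := by
    rw [hg_split, integral_sub ((hL₁i.indicator (hz measurableSet_Iio)).const_mul _)
        ((hL₀i.indicator (hz measurableSet_Iio.compl)).const_mul _),
      integral_const_mul, integral_const_mul,
      hind₁.integral_indicator_preimage hz hL₁i.aestronglyMeasurable measurableSet_Iio,
      hind₀.integral_indicator_preimage hz hL₀i.aestronglyMeasurable measurableSet_Iio.compl,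
      hE, hEc]
    ring
  have hg_sq : ∀ ω, g ω ^ 2 = (h ω - s) ^ 2 * L ω ^ 2 := fun ω => by rw [hg]; ring
  simp_rw [hVar, hEg, hg_sq]
  ring
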